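/- With n, w, a, b, φ, and u_i = φ^i(0) as above, every point x of the simplex conv{u_0, u_1, …, u_n} (the standard Q_n(w)) satisfies x_1 ≥ x_2 ≥ ⋯ ≥ x_n ≥ x_1 - (a-b). Moreover, the set Ω = {x ∈ ℝ^n : x_1 ≥ x_2 ≥ ⋯ ≥ x_n ≥ x_1 - (a-b)} is invariant under φ. -/

import Mathlib

/-!
The simplex is the convex hull of `0` and the partial sums `u_{i+1} = v_0 + ⋯ + v_i`, whose
`j`-th coordinate is `(i + 1) b + (a - b) [j ≤ i]`; these vertices satisfy the defining
inequalities of the prism `Ω`, which is convex, so the whole simplex lies in `Ω`.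
For the invariance, `φ` shifts the coordinates cyclically, so it maps the cyclic chain of
differences `x₀ - x₁, …, x_{n-2} - x_{n-1}, x_{n-1} - x₀ + (a - b)` onto itself rotated by one
step; hence both `φ` and its explicit inverse (the backward shift) preserve `Ω`.
-/

open Set Finset

namespace SchobiPrism

variable {n : ℕ} (h : 0 < n)

def prism (c : ℝ) : Set (EuclideanSpace ℝ (Fin n)) :=
  {x | (∀ i j : Fin n, i ≤ j → x j ≤ x i) ∧ x ⟨0, h⟩ - c ≤ x ⟨n - 1, Nat.sub_one_lt_of_lt h⟩}

def cyclicShift (a b : ℝ) (x : EuclideanSpace ℝ (Fin n)) : EuclideanSpace ℝ (Fin n) :=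
  WithLp.toLp 2 fun i =>
    if (i : ℕ) = 0 then x ⟨n - 1, Nat.sub_one_lt_of_lt h⟩ + a
    else x ⟨(i : ℕ) - 1, (Nat.sub_le _ _).trans_lt i.isLt⟩ + b

def cyclicShiftInv (a b : ℝ) (y : EuclideanSpace ℝ (Fin n)) : EuclideanSpace ℝ (Fin n) :=
  WithLp.toLp 2 fun i =>
    if hi : (i : ℕ) + 1 < n then y ⟨(i : ℕ) + 1, hi⟩ - b else y ⟨0, h⟩ - a

variable {h}

theorem nonneg_of_mem_prism {c : ℝ} {x : EuclideanSpace ℝ (Fin n)} (hx : x ∈ prism h c) :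
    0 ≤ c := by
  have := hx.1 ⟨0, h⟩ ⟨n - 1, by omega⟩ (Fin.mk_le_mk.2 (Nat.zero_le _))
  linarith [hx.2]

theorem zero_mem_prism {c : ℝ} (hc : 0 ≤ c) : (0 : EuclideanSpace ℝ (Fin n)) ∈ prism h c :=
  ⟨fun _ _ _ => le_rfl, by simpa using hc⟩

theorem convex_prism (c : ℝ) : Convex ℝ (prism h c) := by
  intro x hx y hy s t hs ht hst
  simp only [prism, Set.mem_ofPred_eq, PiLp.add_apply, PiLp.smul_apply, smul_eq_mul]
  refine ⟨fun i j hij => ?_, ?_⟩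
  · gcongr
    exacts [hx.1 i j hij, hy.1 i j hij]
  · have hc : c = s * c + t * c := by rw [← add_mul, hst, one_mul]
    linarith [mul_le_mul_of_nonneg_left hx.2 hs, mul_le_mul_of_nonneg_left hy.2 ht]

theorem sum_Iic_ite_eq (a b : ℝ) (i j : Fin n) :
    ∑ k ∈ Iic i, (if k = j then a else b) = ((i : ℕ) + 1) * b + if j ≤ i then a - b else 0 := by
  have hsplit : ∀ k : Fin n, (if k = j then a else b) = b + if k = j then a - b else 0 := by
    intro k; split_ifs <;> ring
  simp only [hsplit, sum_add_distrib, sum_const, sum_ite_eq', Fin.card_Iic, Finset.mem_Iic,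
    nsmul_eq_mul]
  push_cast
  ring

theorem partialSum_mem_prism {a b : ℝ} (hab : b ≤ a) (i : Fin n) :
    (WithLp.toLp 2 fun j => ∑ k ∈ Iic i, if k = j then a else b : EuclideanSpace ℝ (Fin n)) ∈
      prism h (a - b) := by
  simp only [prism, Set.mem_ofPred_eq, sum_Iic_ite_eq]
  refine ⟨fun p q hpq => ?_, ?_⟩
  · have : q ≤ i → p ≤ i := hpq.trans
    split_ifs <;> first | linarith | tauto
  · rw [if_pos (Fin.mk_le_mk.2 (Nat.zero_le _) : (⟨0, h⟩ : Fin n) ≤ i)]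
    split_ifs <;> linarith

theorem convexHull_partialSums_subset_prism {a b : ℝ} (hab : b ≤ a) :
    convexHull ℝ (insert 0 (range fun i : Fin n =>
      (WithLp.toLp 2 fun j => ∑ k ∈ Iic i, if k = j then a else b : EuclideanSpace ℝ (Fin n)))) ⊆
      prism h (a - b) :=
  convexHull_min (insert_subset (zero_mem_prism (sub_nonneg.2 hab))
    (range_subset_iff.2 (partialSum_mem_prism hab))) (convex_prism _)

theorem mapsTo_cyclicShift_prism (a b : ℝ) :
    MapsTo (cyclicShift h a b) (prism h (a - b)) (prism h (a - b)) := by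
  intro x hx
  refine ⟨fun i j hij => ?_, ?_⟩
  · simp only [cyclicShift, PiLp.toLp_apply]
    have hji : (j : ℕ) = 0 → (i : ℕ) = 0 := fun hj => by
      have := Fin.le_def.1 hij; omega
    split_ifs with hj hi hi
    · rfl
    · exact absurd (hji hj) hi
    · linarith [hx.1 ⟨0, h⟩ ⟨(j : ℕ) - 1, by omega⟩ (Fin.mk_le_mk.2 (Nat.zero_le _)), hx.2]
    · linarith [hx.1 ⟨(i : ℕ) - 1, by omega⟩ ⟨(j : ℕ) - 1, by omega⟩
        (Fin.mk_le_mk.2 (by have := Fin.le_def.1 hij; omega))]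
  · simp only [cyclicShift, PiLp.toLp_apply, ↓reduceIte]
    split_ifs with hn
    · linarith [nonneg_of_mem_prism hx]
    · linarith [hx.1 ⟨n - 1 - 1, by omega⟩ ⟨n - 1, by omega⟩ (Fin.mk_le_mk.2 (by omega))]

theorem mapsTo_cyclicShiftInv_prism (a b : ℝ) :
    MapsTo (cyclicShiftInv h a b) (prism h (a - b)) (prism h (a - b)) := by
  intro y hy
  refine ⟨fun i j hij => ?_, ?_⟩
  · simp only [cyclicShiftInv, PiLp.toLp_apply]
    have hij' := Fin.le_def.1 hij
    split_ifs with hj hi hi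
    · linarith [hy.1 _ _ (Fin.mk_le_mk.2 (by omega) : (⟨(i : ℕ) + 1, hi⟩ : Fin n) ≤ ⟨j + 1, hj⟩)]
    · omega
    · linarith [hy.2, hy.1 ⟨(i : ℕ) + 1, hi⟩ ⟨n - 1, by omega⟩ (Fin.mk_le_mk.2 (by omega))]
    · rfl
  · simp only [cyclicShiftInv, PiLp.toLp_apply, dif_neg (show ¬(n - 1 + 1 < n) by omega)]
    split_ifs with hn
    · linarith [hy.1 ⟨0, h⟩ ⟨1, hn⟩ (Fin.mk_le_mk.2 (by omega))]
    · linarith [nonneg_of_mem_prism hy]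

theorem cyclicShift_cyclicShiftInv (a b : ℝ) (y : EuclideanSpace ℝ (Fin n)) :
    cyclicShift h a b (cyclicShiftInv h a b y) = y := by
  ext i
  simp only [cyclicShift, cyclicShiftInv, PiLp.toLp_apply]
  split_ifs with hi hn hi'
  · omega
  · obtain rfl : i = ⟨0, h⟩ := Fin.ext hi
    ring
  · rw [sub_add_cancel]
    exact congrArg y.ofLp (Fin.ext (Nat.sub_add_cancel (Nat.pos_of_ne_zero hi)))
  · omega

theorem image_cyclicShift_prism (a b : ℝ) :
    cyclicShift h a b '' prism h (a - b) = prism h (a - b) :=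
  SurjOn.image_eq_of_mapsTo
    (LeftInvOn.surjOn (fun y _ => cyclicShift_cyclicShiftInv a b y)
      (mapsTo_cyclicShiftInv_prism a b))
    (mapsTo_cyclicShift_prism a b)

end SchobiPrism

theorem schobi_prism_inequalities_and_invariance
    (n : ℕ) (hn : 2 ≤ n) (w : ℝ)
    (b a : ℝ)
    (ha : a = b + Real.sqrt (1 + w))
    (φ : EuclideanSpace ℝ (Fin n) → EuclideanSpace ℝ (Fin n))
    (hφ : ∀ (x : EuclideanSpace ℝ (Fin n)) (i : Fin n),
      φ x i =
        if h : (i : ℕ) = 0 then x ⟨n - 1, by omega⟩ + a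
        else x ⟨(i : ℕ) - 1, by omega⟩ + b)
    (v : Fin n → Fin n → ℝ)
    (hv : ∀ i j, v i j = if i = j then a else b)
    (Q : Set (EuclideanSpace ℝ (Fin n)))
    (hQ : Q = convexHull ℝ (insert (0 : EuclideanSpace ℝ (Fin n))
      (Set.range (fun i : Fin n =>
        (WithLp.toLp 2 (fun j => ∑ k ∈ Finset.Iic i, v k j) : EuclideanSpace ℝ (Fin n))))))
    (Ω : Set (EuclideanSpace ℝ (Fin n)))
    (hΩ : Ω = {x : EuclideanSpace ℝ (Fin n) |
      (∀ i j : Fin n, i ≤ j → x j ≤ x i) ∧ x ⟨0, by omega⟩ - (a - b) ≤ x ⟨n - 1, by omega⟩}) :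
    (∀ x ∈ Q, (∀ i j : Fin n, i ≤ j → x j ≤ x i) ∧
      x ⟨0, by omega⟩ - (a - b) ≤ x ⟨n - 1, by omega⟩) ∧
    φ '' Ω = Ω := by
  have h : 0 < n := by omega
  have hab : b ≤ a := by linarith [Real.sqrt_nonneg (1 + w)]
  obtain rfl : φ = SchobiPrism.cyclicShift h a b := funext fun x => PiLp.ext fun i => hφ x i
  obtain rfl : v = fun k j => if k = j then a else b := funext fun k => funext (hv k)
  subst hQ hΩ
  exact ⟨SchobiPrism.convexHull_partialSums_subset_prism hab,
    SchobiPrism.image_cyclicShift_prism a b⟩
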